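/- arXiv:2506.07201 — 2 statements merged into one kernel-verified Lean document; each statement's English description precedes it below -/
import Mathlib

section
/- Let k ≥ 3 and π ∈ 𝕊_{k−1}. Then π admits a good set with exactly two elements if and only if π is not r-invariant, i.e. r(π) ≠ π. -/
open Finset

attribute [local instance] Classical.propDecidable

noncomputable section

/-- `π` is a permutation of `{1,…,k-1}` given in one-line notation
(`π p` is the entry at position `p`), normalized to `0` outside `[1,k-1]`. -/
def OneLine (k : ℕ) (π : ℕ → ℕ) : Prop :=
  Set.BijOn π (Set.Icc 1 (k - 1)) (Set.Icc 1 (k - 1)) ∧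
    ∀ p, p ∉ Set.Icc 1 (k - 1) → π p = 0

/-- The set `S(π)` of adjacent inversions of `π`:
those `i ∈ [1,k-2]` such that `i+1` appears before `i` in `π`. -/
def adjInvF (k : ℕ) (π : ℕ → ℕ) : Finset ℕ :=
  (Finset.Icc 1 (k - 2)).filter fun i =>
    ∃ p ∈ Finset.Icc 1 (k - 1), ∃ r ∈ Finset.Icc 1 (k - 1),
      p < r ∧ π p = i + 1 ∧ π r = i

/-- `W^π_{k,q}`: weakly increasing `(k-1)`-tuples with entries in `[0,q-1]`
that are strictly increasing at every adjacent inversion of `π`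
(vectors are functions `ℕ → ℕ` supported on `[1,k-1]`). -/
def W (k q : ℕ) (π : ℕ → ℕ) : Set (ℕ → ℕ) :=
  {v | (∀ i, i ∉ Finset.Icc 1 (k - 1) → v i = 0) ∧
       (∀ i ∈ Finset.Icc 1 (k - 1), v i ≤ q - 1) ∧
       (∀ i, 1 ≤ i → i + 1 ≤ k - 1 → v i ≤ v (i + 1)) ∧
       (∀ i ∈ adjInvF k π, v i < v (i + 1))}

/-- `x + e_{π_a} + e_{π_{a+1}} + ⋯ + e_{π_{b-1}}`. -/
def shift (π : ℕ → ℕ) (a b : ℕ) (x : ℕ → ℕ) : ℕ → ℕ :=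
  fun i => x i + if i ∈ (Finset.Icc a (b - 1)).image π then 1 else 0

/-- Adjacency in the graph `G^π_{k,q}`: one vertex is obtained from the other
by adding `e_{π_a} + ⋯ + e_{π_{b-1}}` for some `1 ≤ a < b ≤ k`. -/
def AdjRel (k : ℕ) (π : ℕ → ℕ) (x y : ℕ → ℕ) : Prop :=
  ∃ a b, 1 ≤ a ∧ a < b ∧ b ≤ k ∧ (y = shift π a b x ∨ x = shift π a b y)

/-- The number of maximal blocks of consecutive integers of a finite set `T ⊆ ℕ`. -/
def numBlocks (T : Finset ℕ) : ℕ := (T.filter fun t => t + 1 ∉ T).card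

/-- `cs_i(π)`: the number of pairs `1 ≤ a < b ≤ k` such that
`T_{a,b} = {π_a,…,π_{b-1}}` decomposes into exactly `i` maximal blocks
of consecutive integers. -/
def cs (k : ℕ) (π : ℕ → ℕ) (i : ℕ) : ℕ :=
  ((Finset.Icc 1 k ×ˢ Finset.Icc 1 k).filter fun p =>
    p.1 < p.2 ∧ numBlocks ((Finset.Icc p.1 (p.2 - 1)).image π) = i).card

/-- For `i < j`, `{i,j}` is an edge of `G_π` iff `{i,i+1,…,j-1}` occurs as
a set of consecutive entries of `π`. -/
def GpiEdge (k : ℕ) (π : ℕ → ℕ) (i j : ℕ) : Prop :=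
  ∃ a, 1 ≤ a ∧ a + (j - i) ≤ k ∧
    (Finset.Icc a (a + (j - i) - 1)).image π = Finset.Icc i (j - 1)

/-- Unordered adjacency in `G_π`. -/
def GpiAdjU (k : ℕ) (π : ℕ → ℕ) (i j : ℕ) : Prop :=
  (i < j ∧ GpiEdge k π i j) ∨ (j < i ∧ GpiEdge k π j i)

/-- The position of the value `v` in the one-line notation of `π`. -/
def posOf (k : ℕ) (π : ℕ → ℕ) (v : ℕ) : ℕ :=
  if h : ((Finset.Icc 1 (k - 1)).filter fun t => π t = v).Nonempty then
    ((Finset.Icc 1 (k - 1)).filter fun t => π t = v).min' h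
  else 0

/-- The rotation `r` on one-line permutations: if `π = π₁…π_{t-1}(k-1)π_{t+1}…π_{k-1}`,
then `r(π) = (π_{t+1}+1)…(π_{k-1}+1) 1 (π₁+1)…(π_{t-1}+1)`. -/
def rot (k : ℕ) (π : ℕ → ℕ) : ℕ → ℕ := fun p =>
  if p ∉ Finset.Icc 1 (k - 1) then 0
  else if p < k - posOf k π (k - 1) then π (posOf k π (k - 1) + p) + 1
  else if p = k - posOf k π (k - 1) then 1
  else π (p - (k - posOf k π (k - 1))) + 1

/-- The reflection `s` on one-line permutations: if `π = π₁…π_{i-1} 1 π_{i+1}…π_{k-1}`,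
then `s(π) = (k+1-π_{i-1})…(k+1-π₁) 1 (k+1-π_{k-1})…(k+1-π_{i+1})`. -/
def srefl (k : ℕ) (π : ℕ → ℕ) : ℕ → ℕ := fun p =>
  if p ∉ Finset.Icc 1 (k - 1) then 0
  else if p < posOf k π 1 then k + 1 - π (posOf k π 1 - p)
  else if p = posOf k π 1 then 1
  else k + 1 - π (k + posOf k π 1 - p)

/-- The rotation `ρ` of the vertex set `{1,…,k}`. -/
def rotV (k i : ℕ) : ℕ := if i < k then i + 1 else 1

/-- The reflection `σ` of the vertex set `{1,…,k}`. -/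
def sreflV (k i : ℕ) : ℕ := if i = 1 then 1 else k + 2 - i

/-- The maximal sorted family `(S₁,…,S_k)` associated with `σ`, `0`-indexed:
`sortedFam k σ (i-1) = S_i`. -/
def sortedFam (k : ℕ) (σ : ℕ → ℕ) : ℕ → Finset ℕ
  | 0 => insert 1 ((adjInvF k σ).image (· + 1))
  | j + 1 => insert (σ (j + 1) + 1) ((sortedFam k σ j).erase (σ (j + 1)))

/-- `ear(π)`. -/
def ear (k : ℕ) (π : ℕ → ℕ) : ℕ :=
  ((Finset.Icc 1 (k - 2)).filter fun i => π (i + 1) = π i + 1 ∨ π i = π (i + 1) + 1).card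
    + (({1, k - 1} : Finset ℕ) ∩ ({π 1, π (k - 1)} : Finset ℕ)).card

/-- `ε_i(π) = 1` if `i-1 ∈ S(π)` and `0` otherwise. -/
def eps (k : ℕ) (π : ℕ → ℕ) (i : ℕ) : ℕ := if i - 1 ∈ adjInvF k π then 1 else 0

/-- Extension of a vector with the conventions `x_k = q-1` (`x₀ = 0` holds by
the normalization of vectors in `W^π_{k,q}`). -/
def xext (k q : ℕ) (x : ℕ → ℕ) (i : ℕ) : ℕ := if i = k then q - 1 else x i

/-- The label list `L^π(x) = {i ∈ [1,k] : x_{i-1} < x_i - ε_i(π)}`. -/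
def labels (k q : ℕ) (π : ℕ → ℕ) (x : ℕ → ℕ) : Finset ℕ :=
  (Finset.Icc 1 k).filter fun i => xext k q x (i - 1) + eps k π i < xext k q x i

/-- A Sperner labeling of `G^π_{k,q}`. -/
def IsSperner (k q : ℕ) (π : ℕ → ℕ) (f : (ℕ → ℕ) → ℕ) : Prop :=
  (∀ x ∈ W k q π, f x = 0 ∨ f x ∈ labels k q π x) ∧
  (∀ x ∈ W k q π, ∀ y ∈ W k q π, AdjRel k π x y → f x = f y ∨ f x = 0 ∨ f y = 0)

/-- The entry `w` appears between the entries `u` and `v` in `π`. -/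
def Between (k : ℕ) (π : ℕ → ℕ) (u v w : ℕ) : Prop :=
  (posOf k π u < posOf k π w ∧ posOf k π w < posOf k π v) ∨
  (posOf k π v < posOf k π w ∧ posOf k π w < posOf k π u)

/-- A good set of colors for `π`. -/
def GoodSet (k : ℕ) (π : ℕ → ℕ) (C : Finset ℕ) : Prop :=
  C ⊆ Finset.Icc 1 k ∧
  (∀ i ∈ C, ∀ j ∈ C, i ≠ j → ¬ GpiAdjU k π i j) ∧
  (∀ a ∈ C, ∀ b ∈ C, 1 < a → a < b → b < k →
      ((Between k π (a - 1) b a ∨ Between k π (a - 1) b (b - 1)) ∧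
       (Between k π (b - 1) a (a - 1) ∨ Between k π (b - 1) a b))) ∧
  (1 ∈ C → ∀ b ∈ C, b ≠ 1 → Between k π 1 (b - 1) b) ∧
  (k ∈ C → ∀ b ∈ C, b ≠ k → Between k π b (k - 1) (b - 1))

/-- `x_a - x_{a-1} - ε_a(π)`, the `a`-th coordinate of the distance map `D`. -/
def dval (k q : ℕ) (π : ℕ → ℕ) (x : ℕ → ℕ) (a : ℕ) : ℕ :=
  xext k q x a - xext k q x (a - 1) - eps k π a

/-- The distance coloring determined by a set of colors `C`:
`x` gets color `a ∈ C` if `dval x a` is the unique maximum of `dval x` on `C`,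
and `0` otherwise. -/
def dcol (k q : ℕ) (π : ℕ → ℕ) (C : Finset ℕ) (x : ℕ → ℕ) : ℕ :=
  if h : ∃ a ∈ C, ∀ b ∈ C, b ≠ a → dval k q π x b < dval k q π x a then h.choose else 0

/- ===== auxiliary machinery for stmt14 ===== -/

def dd (k x y : ℕ) : ℕ := if x ≤ y then y - x else y + k - x
def addk (k x y : ℕ) : ℕ := if x + y < k then x + y else x + y - k
def arcm (k x y z : ℕ) : Prop := 0 < dd k x z ∧ dd k x z < dd k x y
def betwL (u v w : ℕ) : Prop := (u < w ∧ w < v) ∨ (v < w ∧ w < u)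
def NestedX (k A B C D : ℕ) : Prop :=
  ¬ ((arcm k A B C ∧ arcm k A B D) ↔ (arcm k C D A ∧ arcm k C D B))
def Dist4 (A B C D : ℕ) : Prop := A ≠ B ∧ A ≠ C ∧ A ≠ D ∧ B ≠ C ∧ B ≠ D ∧ C ≠ D
def PhiF (A B C D : ℕ) : Prop :=
  (betwL A D B ∨ betwL A D C) ∧ (betwL C B A ∨ betwL C B D)
def sucp (k : ℕ) (π : ℕ → ℕ) (p : ℕ) : ℕ := posOf k π (π p + 1)
def StepM (k : ℕ) (π : ℕ → ℕ) (M : ℕ) : Prop :=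
  ∀ p, p < k → sucp k π p = addk k p M
def itA (k X₀ : ℕ) : ℕ → ℕ
  | 0 => X₀
  | n+1 => addk k (itA k X₀ n) 1

lemma M1 (k A B C D : ℕ) (hk : 3 ≤ k) (hA : A < k) (hB : B < k) (hC : C < k) (hD : D < k)
    (hB1 : 1 ≤ B) (hC1 : 1 ≤ C) (hd : Dist4 A B C D) :
    PhiF A B C D ↔ NestedX k A B C D := by
  simp only [PhiF, NestedX, arcm, betwL, Dist4, dd] at *
  split_ifs <;> omega

lemma M2 (k B C D : ℕ) (hB : B < k) (hC : C < k) (hD : D < k)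
    (hB1 : 1 ≤ B) (hC1 : 1 ≤ C) (hD1 : 1 ≤ D) (hd : Dist4 0 B C D) :
    PhiF 0 B C D ↔ betwL B C D := by
  simp only [PhiF, betwL, Dist4] at *
  omega

lemma M3 (k A B C : ℕ) (hA : A < k) (hB : B < k) (hC : C < k)
    (hA1 : 1 ≤ A) (hB1 : 1 ≤ B) (hC1 : 1 ≤ C) (hd : Dist4 A B C 0) :
    PhiF A B C 0 ↔ betwL B C A := by
  simp only [PhiF, betwL, Dist4] at *
  omega

lemma M4 (k A B C D p q : ℕ) (hA : A < k) (hB : B < k) (hC : C < k) (hD : D < k)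
    (hd : Dist4 A B C D) (hpB : p ≤ B) (hBq : B ≤ q) (hpC : p ≤ C) (hCq : C ≤ q)
    (hAo : ¬ (p ≤ A ∧ A ≤ q)) (hDo : ¬ (p ≤ D ∧ D ≤ q)) (hq : q < k) :
    ¬ NestedX k A B C D := by
  simp only [NestedX, arcm, Dist4, dd] at *
  split_ifs <;> omega

lemma M5 (k A B C D : ℕ) (hA : A < k) (hB : B < k) (hC : C < k) (hD : D < k)
    (hd : Dist4 A B C D) (heq : dd k A B = dd k C D) :
    ¬ NestedX k A B C D := by
  simp only [NestedX, arcm, Dist4, dd] at *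
  split_ifs at * <;> omega

lemma NestedX_symm (k A B C D : ℕ) (h : NestedX k A B C D) : NestedX k C D A B := by
  simp only [NestedX] at *; tauto

lemma Dist4_symm {A B C D : ℕ} (h : Dist4 A B C D) : Dist4 C D A B := by
  simp only [Dist4] at *; omega

lemma dd_addk (k x M : ℕ) (hx : x < k) (hM : M < k) : dd k x (addk k x M) = M := by
  simp only [dd, addk]; split_ifs <;> omega

lemma addk_lt (k x M : ℕ) (hx : x < k) (hM : M < k) : addk k x M < k := by
  simp only [addk]; split_ifs <;> omega

lemma dd_eq_zero (k x y : ℕ) (hx : x < k) (hy : y < k) : dd k x y = 0 ↔ x = y := by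
  simp only [dd]; split_ifs <;> omega

lemma dd_lt (k x y : ℕ) (hx : x < k) (hy : y < k) : dd k x y < k := by
  simp only [dd]; split_ifs <;> omega

lemma dd_inv (k x y M : ℕ) (hx : x < k) (hy : y < k) (hM : M < k) (h : dd k x y = M) :
    y = addk k x M := by
  simp only [dd, addk] at *; split_ifs at * <;> omega

lemma ddrel (k u x y : ℕ) (hu : u < k) (hy : y < k) (hk : 2 ≤ k) (hx : x = addk k u 1) :
    (dd k u y = 0 ∧ dd k x y = k - 1) ∨ dd k x y + 1 = dd k u y := by
  subst hx; simp only [dd, addk] at *; split_ifs <;> omega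

lemma dd_back (k u : ℕ) (hu : u < k) (hk : 2 ≤ k) : dd k (addk k u 1) u = k - 1 := by
  simp only [dd, addk]; split_ifs <;> omega

lemma addk_one_ne (k u : ℕ) (hu : u < k) (hk : 2 ≤ k) : addk k u 1 ≠ u := by
  simp only [addk]; split_ifs <;> omega

lemma addk_addk (k u M : ℕ) (hu : u < k) (hM : 1 ≤ M) (hMk : M < k) :
    addk k (addk k u 1) (M - 1) = addk k u M := by
  simp only [addk]; split_ifs <;> omega

section Infra
variable {k : ℕ} {π : ℕ → ℕ}

lemma pi_zero (hπ : OneLine k π) {p : ℕ} (hp : ¬(1 ≤ p ∧ p ≤ k-1)) : π p = 0 :=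
  hπ.2 p (by rw [Set.mem_Icc]; omega)

lemma pi_mem (hπ : OneLine k π) {p : ℕ} (h1 : 1 ≤ p) (h2 : p ≤ k-1) :
    1 ≤ π p ∧ π p ≤ k-1 := by
  have := hπ.1.mapsTo (Set.mem_Icc.2 ⟨h1, h2⟩)
  rwa [Set.mem_Icc] at this

lemma pi_le (hπ : OneLine k π) {p : ℕ} (hp : p < k) : π p ≤ k - 1 := by
  rcases Nat.eq_zero_or_pos p with rfl | hp1
  · rw [pi_zero hπ (by omega)]; omega
  · exact (pi_mem hπ hp1 (by omega)).2

lemma pi_inj (hπ : OneLine k π) {p q : ℕ} (hp : p < k) (hq : q < k) (h : π p = π q) :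
    p = q := by
  rcases Nat.eq_zero_or_pos p with rfl | hp1
  · rcases Nat.eq_zero_or_pos q with rfl | hq1
    · rfl
    · have h0 : π 0 = 0 := pi_zero hπ (by omega)
      have := pi_mem hπ hq1 (by omega)
      omega
  · rcases Nat.eq_zero_or_pos q with rfl | hq1
    · have h0 : π 0 = 0 := pi_zero hπ (by omega)
      have := pi_mem hπ hp1 (by omega)
      omega
    · exact hπ.1.injOn (Set.mem_Icc.2 ⟨hp1, by omega⟩) (Set.mem_Icc.2 ⟨hq1, by omega⟩) h

lemma posOf_spec (hπ : OneLine k π) {v : ℕ} (h1 : 1 ≤ v) (h2 : v ≤ k-1) :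
    (1 ≤ posOf k π v ∧ posOf k π v ≤ k-1) ∧ π (posOf k π v) = v := by
  obtain ⟨p, hp, hpv⟩ := hπ.1.surjOn (Set.mem_Icc.2 ⟨h1, h2⟩)
  rw [Set.mem_Icc] at hp
  have hne : ((Finset.Icc 1 (k - 1)).filter fun t => π t = v).Nonempty :=
    ⟨p, Finset.mem_filter.2 ⟨Finset.mem_Icc.2 ⟨hp.1, hp.2⟩, hpv⟩⟩
  rw [posOf, dif_pos hne]
  have := Finset.min'_mem _ hne
  rw [Finset.mem_filter, Finset.mem_Icc] at this
  exact ⟨this.1, this.2⟩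

lemma posOf_none (hπ : OneLine k π) {v : ℕ} (h : v = 0 ∨ k ≤ v) : posOf k π v = 0 := by
  rw [posOf, dif_neg]
  rintro ⟨p, hp⟩
  rw [Finset.mem_filter, Finset.mem_Icc] at hp
  have := pi_mem hπ hp.1.1 hp.1.2
  omega

lemma posOf_lt (hπ : OneLine k π) (hk : 1 ≤ k) (v : ℕ) : posOf k π v < k := by
  rw [posOf]
  split_ifs with h
  · have := Finset.min'_mem _ h
    rw [Finset.mem_filter, Finset.mem_Icc] at this
    omega
  · omega

lemma posOf_pi (hπ : OneLine k π) {p : ℕ} (hp : p < k) : posOf k π (π p) = p := by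
  rcases Nat.eq_zero_or_pos p with rfl | hp1
  · rw [pi_zero hπ (by omega)]; exact posOf_none hπ (Or.inl rfl)
  · have hm := pi_mem hπ hp1 (by omega)
    have hs := posOf_spec hπ hm.1 hm.2
    exact pi_inj hπ (by omega) hp hs.2

lemma posOf_inj (hπ : OneLine k π) {v w : ℕ} (h1 : 1 ≤ v) (h2 : v ≤ k-1)
    (h3 : 1 ≤ w) (h4 : w ≤ k-1) (h : posOf k π v = posOf k π w) : v = w := by
  have hv := posOf_spec hπ h1 h2
  have hw := posOf_spec hπ h3 h4
  rw [← hv.2, ← hw.2, h]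

lemma pos_ne (hπ : OneLine k π) (hk : 3 ≤ k) {v w : ℕ} (hv1 : 1 ≤ v) (hv2 : v ≤ k-1)
    (hw : w = 0 ∨ w = k ∨ (1 ≤ w ∧ w ≤ k-1 ∧ w ≠ v)) :
    posOf k π v ≠ posOf k π w := by
  have hs := posOf_spec hπ hv1 hv2
  rcases hw with rfl | hwk | ⟨w1, w2, w3⟩
  · rw [posOf_none hπ (Or.inl rfl)]; omega
  · rw [hwk, posOf_none hπ (Or.inr (le_refl k))]; omega
  · exact fun he => w3 (posOf_inj hπ w1 w2 hv1 hv2 he.symm)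

lemma sucp_lt (hπ : OneLine k π) (hk : 1 ≤ k) (p : ℕ) : sucp k π p < k :=
  posOf_lt hπ hk _

lemma sucp_ne (hπ : OneLine k π) (hk : 2 ≤ k) {p : ℕ} (hp : p < k) : sucp k π p ≠ p := by
  rw [sucp]
  rcases Nat.eq_zero_or_pos p with rfl | hp1
  · rw [pi_zero hπ (by omega)]
    have := posOf_spec hπ (le_refl 1) (by omega : (1:ℕ) ≤ k - 1)
    norm_num
    omega
  · have hm := pi_mem hπ hp1 (by omega)
    rcases Nat.lt_or_ge (π p) (k-1) with h | h
    · have hs := posOf_spec hπ (by omega : 1 ≤ π p + 1) (by omega)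
      intro he
      rw [he] at hs
      have : posOf k π (π p) = p := posOf_pi hπ hp
      omega
    · have : π p = k - 1 := by omega
      rw [this]
      have : k - 1 + 1 = k := by omega
      rw [this, posOf_none hπ (Or.inr (le_refl k))]
      omega

lemma sucp_inj (hπ : OneLine k π) (hk : 2 ≤ k) {p q : ℕ} (hp : p < k) (hq : q < k)
    (h : sucp k π p = sucp k π q) : p = q := by
  rw [sucp, sucp] at h
  have hpk : π p ≤ k - 1 := pi_le hπ hp
  have hqk : π q ≤ k - 1 := pi_le hπ hq
  apply pi_inj hπ hp hq
  rcases Nat.lt_or_ge (π p) (k-1) with h1 | h1 <;> rcases Nat.lt_or_ge (π q) (k-1) with h2 | h2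
  · have hs1 := posOf_spec hπ (by omega : 1 ≤ π p + 1) (by omega)
    have hs2 := posOf_spec hπ (by omega : 1 ≤ π q + 1) (by omega)
    have := posOf_inj hπ (by omega : 1 ≤ π p + 1) (by omega) (by omega : 1 ≤ π q + 1) (by omega) h
    omega
  · have : π q = k - 1 := by omega
    rw [this] at h
    have e1 : k - 1 + 1 = k := by omega
    rw [e1, posOf_none hπ (Or.inr (le_refl k))] at h
    have hs1 := posOf_spec hπ (by omega : 1 ≤ π p + 1) (by omega)
    omega
  · have : π p = k - 1 := by omega
    rw [this] at h
    have e1 : k - 1 + 1 = k := by omega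
    rw [e1, posOf_none hπ (Or.inr (le_refl k))] at h
    have hs2 := posOf_spec hπ (by omega : 1 ≤ π q + 1) (by omega)
    omega
  · omega

lemma sucp_chord (hπ : OneLine k π) {c : ℕ} (h1 : 1 ≤ c) (h2 : c ≤ k) :
    sucp k π (posOf k π (c-1)) = posOf k π c := by
  rw [sucp]
  rcases Nat.eq_or_lt_of_le h1 with h | h
  · rw [← h]
    norm_num
    rw [posOf_none hπ (Or.inl rfl), pi_zero hπ (by omega)]
  · have hs := posOf_spec hπ (by omega : 1 ≤ c - 1) (by omega)
    rw [hs.2]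
    congr 1
    omega

end Infra
section RotStep
variable {k : ℕ} {π : ℕ → ℕ}

lemma rot_in (k : ℕ) (π : ℕ → ℕ) {p : ℕ} (h1 : 1 ≤ p) (h2 : p ≤ k - 1) :
    rot k π p = if p < k - posOf k π (k - 1) then π (posOf k π (k - 1) + p) + 1
      else if p = k - posOf k π (k - 1) then 1
      else π (p - (k - posOf k π (k - 1))) + 1 := by
  rw [rot, if_neg]
  rw [not_not, Finset.mem_Icc]
  exact ⟨h1, h2⟩

lemma rot_out (k : ℕ) (π : ℕ → ℕ) {p : ℕ} (h : ¬(1 ≤ p ∧ p ≤ k - 1)) :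
    rot k π p = 0 := by
  rw [rot, if_pos]
  rw [Finset.mem_Icc]
  exact h

lemma L2a (hπ : OneLine k π) (hk : 3 ≤ k) (hrot : rot k π = π) :
    ∃ M, 1 ≤ M ∧ M < k ∧ StepM k π M := by
  have hts := posOf_spec hπ (show 1 ≤ k-1 by omega) (le_refl (k-1))
  set t := posOf k π (k-1) with ht
  refine ⟨k - t, by omega, by omega, ?_⟩
  intro p hp
  have hπM : π (k - t) = 1 := by
    have := congrFun hrot (k - t)
    rw [rot_in k π (by omega : 1 ≤ k - t) (by omega)] at this
    rw [← ht, if_neg (by omega), if_pos rfl] at this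
    omega
  rcases Nat.eq_zero_or_pos p with rfl | hp1
  · rw [sucp, pi_zero hπ (by omega)]
    have e1 : posOf k π (0 + 1) = posOf k π (π (k - t)) := by rw [hπM]
    rw [e1, posOf_pi hπ (by omega : k - t < k)]
    simp only [addk]
    rw [if_pos (by omega)]
    omega
  · have hv := pi_mem hπ hp1 (by omega)
    have hpv : posOf k π (π p) = p := posOf_pi hπ hp
    rcases Nat.lt_or_ge (π p) (k-1) with hvlt | hvge
    · have hpt : p ≠ t := by
        intro he
        have h2 : posOf k π (π p) = posOf k π (k-1) := by rw [hpv, he, ht]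
        have := posOf_inj hπ hv.1 hv.2 (by omega : 1 ≤ k-1) (le_refl (k-1)) h2
        omega
      rcases Nat.lt_or_ge p t with hplt | hpge
      · -- p < t : use third branch at x = p + (k - t)
        have := congrFun hrot (p + (k - t))
        rw [rot_in k π (by omega : 1 ≤ p + (k - t)) (by omega)] at this
        rw [← ht, if_neg (by omega), if_neg (by omega)] at this
        have he : p + (k - t) - (k - t) = p := by omega
        rw [he] at this
        rw [sucp, this, posOf_pi hπ (by omega : p + (k - t) < k)]
        simp only [addk]
        rw [if_pos (by omega)]
      · -- p > t : use first branch at x = p - t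
        have hplt : t < p := by omega
        have := congrFun hrot (p - t)
        rw [rot_in k π (by omega : 1 ≤ p - t) (by omega)] at this
        rw [← ht, if_pos (by omega)] at this
        have he : t + (p - t) = p := by omega
        rw [he] at this
        rw [sucp, this, posOf_pi hπ (by omega : p - t < k)]
        simp only [addk]
        rw [if_neg (by omega)]
        omega
    · -- π p = k - 1, so p = t
      have hpt : p = t := by
        rw [ht]
        rw [show π p = k - 1 by omega] at hpv
        exact hpv.symm
      rw [sucp, show π p = k - 1 by omega, show k - 1 + 1 = k by omega,
        posOf_none hπ (Or.inr (le_refl k))]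
      simp only [addk]
      rw [if_neg (by omega)]
      omega

lemma L2b (hπ : OneLine k π) (hk : 3 ≤ k) {M : ℕ} (h1 : 1 ≤ M) (h2 : M < k)
    (hstep : StepM k π M) : rot k π = π := by
  have hts := posOf_spec hπ (show 1 ≤ k-1 by omega) (le_refl (k-1))
  set t := posOf k π (k-1) with ht
  have hchord : ∀ c, 1 ≤ c → c ≤ k → posOf k π c = addk k (posOf k π (c-1)) M := by
    intro c hc1 hc2
    rw [← sucp_chord hπ hc1 hc2]
    exact hstep _ (posOf_lt hπ (by omega) _)
  have htM : t + M = k := by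
    have h0 : posOf k π k = 0 := posOf_none hπ (Or.inr (le_refl k))
    have hc := hchord k (by omega) (le_refl k)
    rw [h0, ← ht] at hc
    simp only [addk] at hc
    split_ifs at hc <;> omega
  have hpos1 : posOf k π 1 = M := by
    have h0 : posOf k π 0 = 0 := posOf_none hπ (Or.inl rfl)
    have hc := hchord 1 (le_refl 1) (by omega)
    norm_num at hc
    rw [h0] at hc
    simp only [addk] at hc
    split_ifs at hc <;> omega
  funext p
  by_cases hpin : 1 ≤ p ∧ p ≤ k - 1
  case neg => rw [rot_out k π hpin, pi_zero hπ hpin]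
  case pos =>
  obtain ⟨hp1, hp2⟩ := hpin
  have hv := pi_mem hπ hp1 hp2
  have hpv : posOf k π (π p) = p := posOf_pi hπ (by omega)
  rw [rot_in k π hp1 hp2, ← ht]
  by_cases hb2 : p = k - t
  · rw [if_neg (by omega), if_pos hb2]
    have hpM : p = M := by omega
    have hsp := (posOf_spec hπ (le_refl 1) (by omega : (1:ℕ) ≤ k-1)).2
    rw [hpos1, ← hpM] at hsp
    exact hsp.symm
  · have hv2 : 2 ≤ π p := by
      rcases Nat.lt_or_ge (π p) 2 with hlt | hge
      · exfalso
        have : π p = 1 := by omega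
        rw [this, hpos1] at hpv
        omega
      · exact hge
    have hc := hchord (π p) (by omega) (by omega)
    rw [hpv] at hc
    have hq := posOf_spec hπ (show 1 ≤ π p - 1 by omega) (show π p - 1 ≤ k-1 by omega)
    have hqlt : posOf k π (π p - 1) < k := by omega
    by_cases hb1 : p < k - t
    · rw [if_pos hb1]
      have hqe : posOf k π (π p - 1) = t + p := by
        simp only [addk] at hc
        split_ifs at hc <;> omega
      rw [← hqe, hq.2]
      omega
    · rw [if_neg hb1, if_neg hb2]
      have hqe : posOf k π (π p - 1) = p - (k - t) := by
        simp only [addk] at hc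
        split_ifs at hc <;> omega
      rw [← hqe, hq.2]
      omega

lemma L3 (hπ : OneLine k π) (hk : 3 ≤ k) {M : ℕ} (h1 : 1 ≤ M) (h2 : M < k)
    (hstep : StepM k π M) {a b : ℕ} (ha : 1 ≤ a) (hab : a < b) (hb : b ≤ k) :
    ¬(Dist4 (posOf k π (a-1)) (posOf k π a) (posOf k π (b-1)) (posOf k π b) ∧
      NestedX k (posOf k π (a-1)) (posOf k π a) (posOf k π (b-1)) (posOf k π b)) := by
  rintro ⟨hd, hn⟩
  have hA : posOf k π (a-1) < k := posOf_lt hπ (by omega) _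
  have hC : posOf k π (b-1) < k := posOf_lt hπ (by omega) _
  have e1 : posOf k π a = addk k (posOf k π (a-1)) M := by
    rw [← sucp_chord hπ ha (by omega)]
    exact hstep _ hA
  have e2 : posOf k π b = addk k (posOf k π (b-1)) M := by
    rw [← sucp_chord hπ (by omega) hb]
    exact hstep _ hC
  refine M5 k _ _ _ _ hA ?_ hC ?_ hd ?_ hn
  · rw [e1]; exact addk_lt k _ M hA h2
  · rw [e2]; exact addk_lt k _ M hC h2
  · rw [e1, e2, dd_addk k _ M hA h2, dd_addk k _ M hC h2]

end RotStep
section Main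
variable {k : ℕ} {π : ℕ → ℕ}

lemma L4 (hπ : OneLine k π) (hk : 3 ≤ k)
    (Hnone : ∀ a b : ℕ, 1 ≤ a → a < b → b ≤ k →
      ¬(Dist4 (posOf k π (a-1)) (posOf k π a) (posOf k π (b-1)) (posOf k π b) ∧
        NestedX k (posOf k π (a-1)) (posOf k π a) (posOf k π (b-1)) (posOf k π b))) :
    ∃ M, 1 ≤ M ∧ M < k ∧ StepM k π M := by
  obtain ⟨X₀, hX₀m, hmax⟩ := Finset.exists_max_image (Finset.range k)
    (fun p => dd k p (sucp k π p)) ⟨0, Finset.mem_range.2 (by omega)⟩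
  rw [Finset.mem_range] at hX₀m
  set M := dd k X₀ (sucp k π X₀) with hMdef
  have hub : ∀ p, p < k → dd k p (sucp k π p) ≤ M :=
    fun p hp => hmax p (Finset.mem_range.2 hp)
  have hsX : sucp k π X₀ < k := sucp_lt hπ (by omega) _
  have hM1 : 1 ≤ M := by
    have h0 := dd_eq_zero k X₀ (sucp k π X₀) hX₀m hsX
    have := sucp_ne hπ (by omega) hX₀m
    omega
  have hMk : M < k := dd_lt k _ _ hX₀m hsX
  refine ⟨M, hM1, hMk, ?_⟩
  rcases Nat.eq_or_lt_of_le hM1 with hM1' | hM2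
  · intro p hp
    have hu := hub p hp
    have hs := sucp_lt hπ (by omega : 1 ≤ k) p
    have hne := sucp_ne hπ (by omega) hp
    have h0 := dd_eq_zero k p (sucp k π p) hp hs
    exact dd_inv k p _ M hp hs hMk (by omega)
  -- main case M ≥ 2
  have key : ∀ u, u < k → sucp k π u = addk k u M →
      ¬(0 < dd k u (sucp k π (addk k u 1)) ∧ dd k u (sucp k π (addk k u 1)) < M) := by
    intro u hu hsu
    rintro ⟨hy1, hy2⟩
    have hxk : addk k u 1 < k := addk_lt k u 1 hu (by omega)
    have hyk : sucp k π (addk k u 1) < k := sucp_lt hπ (by omega) _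
    have hxu : addk k u 1 ≠ u := addk_one_ne k u hu (by omega)
    have hyx : sucp k π (addk k u 1) ≠ addk k u 1 := sucp_ne hπ (by omega) hxk
    have hBk : addk k u M < k := addk_lt k u M hu hMk
    have hddux : dd k u (addk k u 1) = 1 := dd_addk k u 1 hu (by omega)
    have hdduB : dd k u (addk k u M) = M := dd_addk k u M hu hMk
    have hrel := ddrel k u (addk k u 1) (sucp k π (addk k u 1)) hu hyk (by omega) rfl
    have hdxy : dd k (addk k u 1) (sucp k π (addk k u 1)) + 1
        = dd k u (sucp k π (addk k u 1)) := by
      rcases hrel with ⟨h, _⟩ | h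
      · omega
      · exact h
    have hπu : π u ≤ k - 1 := pi_le hπ hu
    have hπx : π (addk k u 1) ≤ k - 1 := pi_le hπ hxk
    have ha'b' : π (addk k u 1) + 1 ≠ π u + 1 := by
      intro he
      exact hxu (pi_inj hπ hxk hu (by omega))
    have cA : posOf k π (π (addk k u 1) + 1 - 1) = addk k u 1 := by
      rw [Nat.add_sub_cancel]; exact posOf_pi hπ hxk
    have cB : posOf k π (π (addk k u 1) + 1) = sucp k π (addk k u 1) := rfl
    have cC : posOf k π (π u + 1 - 1) = u := by
      rw [Nat.add_sub_cancel]; exact posOf_pi hπ hu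
    have cD : posOf k π (π u + 1) = addk k u M := hsu
    have hd0 : dd k u u = 0 := (dd_eq_zero k u u hu hu).2 rfl
    have hDist : Dist4 u (addk k u M) (addk k u 1) (sucp k π (addk k u 1)) := by
      refine ⟨?_, ?_, ?_, ?_, ?_, ?_⟩
      · intro he; rw [← he] at hdduB; omega
      · exact fun h => hxu h.symm
      · intro he
        have := (dd_eq_zero k u _ hu hyk).2 he
        omega
      · intro he; rw [← he] at hddux; omega
      · intro he; rw [← he] at hy2; omega
      · exact fun h => hyx h.symm
    have hNest : NestedX k u (addk k u M) (addk k u 1) (sucp k π (addk k u 1)) := by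
      intro hiff
      have hP : arcm k u (addk k u M) (addk k u 1) ∧
          arcm k u (addk k u M) (sucp k π (addk k u 1)) := by
        simp only [arcm, hdduB, hddux]
        omega
      have hQ := hiff.1 hP
      simp only [arcm] at hQ
      have hdxu : dd k (addk k u 1) u = k - 1 := dd_back k u hu (by omega)
      omega
    rcases lt_or_gt_of_ne ha'b' with hlt | hgt
    · refine Hnone (π (addk k u 1) + 1) (π u + 1) (by omega) hlt (by omega) ?_
      rw [cA, cB, cC, cD]
      exact ⟨Dist4_symm hDist, NestedX_symm k _ _ _ _ hNest⟩
    · refine Hnone (π u + 1) (π (addk k u 1) + 1) (by omega) hgt (by omega) ?_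
      rw [cA, cB, cC, cD]
      exact ⟨hDist, hNest⟩
  have hitlt : ∀ n, itA k X₀ n < k := by
    intro n
    induction n with
    | zero => exact hX₀m
    | succ n ih => rw [itA]; exact addk_lt k _ 1 ih (by omega)
  have main : ∀ n, sucp k π (itA k X₀ n) = addk k (itA k X₀ n) M := by
    intro n
    induction n with
    | zero =>
      rw [itA]
      exact dd_inv k X₀ _ M hX₀m hsX hMk hMdef.symm
    | succ n ih =>
      have hu : itA k X₀ n < k := hitlt n
      rw [itA]
      have h3 := key (itA k X₀ n) hu ih
      have hxk : addk k (itA k X₀ n) 1 < k := addk_lt k _ 1 hu (by omega)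
      have hyk : sucp k π (addk k (itA k X₀ n) 1) < k := sucp_lt hπ (by omega) _
      have hyx : sucp k π (addk k (itA k X₀ n) 1) ≠ addk k (itA k X₀ n) 1 :=
        sucp_ne hπ (by omega) hxk
      have h1' := hub _ hxk
      have h2' : 1 ≤ dd k (addk k (itA k X₀ n) 1) (sucp k π (addk k (itA k X₀ n) 1)) := by
        have h0 := dd_eq_zero k (addk k (itA k X₀ n) 1) (sucp k π (addk k (itA k X₀ n) 1))
          hxk hyk
        omega
      rcases ddrel k (itA k X₀ n) (addk k (itA k X₀ n) 1) (sucp k π (addk k (itA k X₀ n) 1))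
          hu hyk (by omega) rfl with ⟨hz, hk1⟩ | hrel
      · exact dd_inv k _ _ M hxk hyk hMk (by omega)
      · have hcase : dd k (addk k (itA k X₀ n) 1) (sucp k π (addk k (itA k X₀ n) 1)) = M ∨
            dd k (addk k (itA k X₀ n) 1) (sucp k π (addk k (itA k X₀ n) 1)) = M - 1 := by
          by_contra hcon
          push_neg at hcon
          exact h3 ⟨by omega, by omega⟩
        rcases hcase with he | he
        · exact dd_inv k _ _ M hxk hyk hMk he
        · exfalso
          have hyB : sucp k π (addk k (itA k X₀ n) 1) = addk k (itA k X₀ n) M := by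
            have := dd_inv k _ _ (M-1) hxk hyk (by omega) he
            rw [this, addk_addk k _ M hu (by omega) hMk]
          have hcontra : sucp k π (addk k (itA k X₀ n) 1) = sucp k π (itA k X₀ n) := by
            rw [hyB, ih]
          have := sucp_inj hπ (by omega) hxk hu hcontra
          exact addk_one_ne k (itA k X₀ n) hu (by omega) this
  intro p hp
  have hspec : ∀ n, n < k → itA k X₀ n = if X₀ + n < k then X₀ + n else X₀ + n - k := by
    intro n
    induction n with
    | zero => intro _; rw [itA]; split_ifs <;> omega
    | succ n ih =>
      intro hn
      rw [itA, ih (by omega)]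
      simp only [addk]
      split_ifs <;> omega
  have hnlt : (if X₀ ≤ p then p - X₀ else p + k - X₀) < k := by split_ifs <;> omega
  have hit : itA k X₀ (if X₀ ≤ p then p - X₀ else p + k - X₀) = p := by
    rw [hspec _ hnlt]
    split_ifs <;> omega
  rw [← hit]
  exact main _

lemma edge_succ (hπ : OneLine k π) (hk : 3 ≤ k) {a : ℕ} (h1 : 1 ≤ a) (h2 : a ≤ k-1) :
    GpiEdge k π a (a+1) := by
  have hs := posOf_spec hπ h1 h2
  refine ⟨posOf k π a, hs.1.1, by omega, ?_⟩
  have e : a + 1 - a = 1 := by omega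
  rw [e]
  have e2 : posOf k π a + 1 - 1 = posOf k π a := by omega
  have e3 : a + 1 - 1 = a := by omega
  rw [e2, e3, Finset.Icc_self, Finset.image_singleton, hs.2, Finset.Icc_self]

lemma edge_full (hπ : OneLine k π) (hk : 3 ≤ k) : GpiEdge k π 1 k := by
  refine ⟨1, le_refl 1, by omega, ?_⟩
  have e : 1 + (k - 1) - 1 = k - 1 := by omega
  rw [e]
  ext v
  simp only [Finset.mem_image, Finset.mem_Icc]
  constructor
  · rintro ⟨p, hp, rfl⟩
    exact pi_mem hπ hp.1 hp.2
  · intro hv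
    have hs := posOf_spec hπ hv.1 hv.2
    exact ⟨posOf k π v, ⟨hs.1.1, hs.1.2⟩, hs.2⟩

lemma edge_kill (hπ : OneLine k π) (hk : 3 ≤ k) {a b : ℕ} (h1 : 1 ≤ a) (hab : a < b)
    (hb : b ≤ k)
    (hD4 : Dist4 (posOf k π (a-1)) (posOf k π a) (posOf k π (b-1)) (posOf k π b))
    (hN : NestedX k (posOf k π (a-1)) (posOf k π a) (posOf k π (b-1)) (posOf k π b)) :
    ¬ GpiEdge k π a b := by
  rintro ⟨p, hp1, hp2, him⟩
  have hq : p + (b - a) - 1 ≤ k - 1 := by omega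
  have hBmem : p ≤ posOf k π a ∧ posOf k π a ≤ p + (b-a) - 1 := by
    have hm : a ∈ Finset.Icc a (b-1) := Finset.mem_Icc.2 ⟨le_refl a, by omega⟩
    rw [← him, Finset.mem_image] at hm
    obtain ⟨r, hr, hra⟩ := hm
    rw [Finset.mem_Icc] at hr
    have : posOf k π a = r := by rw [← hra]; exact posOf_pi hπ (by omega)
    omega
  have hCmem : p ≤ posOf k π (b-1) ∧ posOf k π (b-1) ≤ p + (b-a) - 1 := by
    have hm : b - 1 ∈ Finset.Icc a (b-1) := Finset.mem_Icc.2 ⟨by omega, le_refl _⟩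
    rw [← him, Finset.mem_image] at hm
    obtain ⟨r, hr, hra⟩ := hm
    rw [Finset.mem_Icc] at hr
    have : posOf k π (b-1) = r := by rw [← hra]; exact posOf_pi hπ (by omega)
    omega
  have hAmem : ¬(p ≤ posOf k π (a-1) ∧ posOf k π (a-1) ≤ p + (b-a) - 1) := by
    rcases Nat.eq_or_lt_of_le h1 with ha1 | ha2
    · rw [show a - 1 = 0 by omega, posOf_none hπ (Or.inl rfl)]
      omega
    · rintro ⟨u1, u2⟩
      have hm : π (posOf k π (a-1)) ∈ Finset.Icc a (b-1) := by
        rw [← him]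
        exact Finset.mem_image_of_mem _ (Finset.mem_Icc.2 ⟨u1, u2⟩)
      rw [(posOf_spec hπ (show 1 ≤ a-1 by omega) (by omega)).2, Finset.mem_Icc] at hm
      omega
  have hDmem : ¬(p ≤ posOf k π b ∧ posOf k π b ≤ p + (b-a) - 1) := by
    rcases Nat.eq_or_lt_of_le hb with hbk | hbk
    · rw [hbk, posOf_none hπ (Or.inr (le_refl k))]
      omega
    · rintro ⟨u1, u2⟩
      have hm : π (posOf k π b) ∈ Finset.Icc a (b-1) := by
        rw [← him]
        exact Finset.mem_image_of_mem _ (Finset.mem_Icc.2 ⟨u1, u2⟩)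
      rw [(posOf_spec hπ (show 1 ≤ b by omega) (by omega)).2, Finset.mem_Icc] at hm
      omega
  exact M4 k _ _ _ _ p (p + (b-a) - 1) (posOf_lt hπ (by omega) _) (posOf_lt hπ (by omega) _)
    (posOf_lt hπ (by omega) _) (posOf_lt hπ (by omega) _) hD4
    hBmem.1 hBmem.2 hCmem.1 hCmem.2 hAmem hDmem (by omega) hN

lemma dist4_of (hπ : OneLine k π) (hk : 3 ≤ k) {a b : ℕ} (h1 : 1 ≤ a) (hab2 : a + 2 ≤ b)
    (hb : b ≤ k) (hnk : ¬(a = 1 ∧ b = k)) :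
    Dist4 (posOf k π (a-1)) (posOf k π a) (posOf k π (b-1)) (posOf k π b) := by
  have hAD : posOf k π (a-1) ≠ posOf k π b := by
    rcases Nat.eq_or_lt_of_le h1 with ha1 | ha2
    · exact fun he => (pos_ne hπ hk (show 1 ≤ b by omega) (by omega) (by omega)) he.symm
    · exact pos_ne hπ hk (show 1 ≤ a - 1 by omega) (by omega) (by omega)
  refine ⟨?_, ?_, hAD, ?_, ?_, ?_⟩
  · exact fun he => (pos_ne hπ hk (show 1 ≤ a by omega) (by omega) (by omega)) he.symm
  · exact fun he => (pos_ne hπ hk (show 1 ≤ b - 1 by omega) (by omega) (by omega)) he.symm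
  · exact pos_ne hπ hk (show 1 ≤ a by omega) (by omega) (by omega)
  · exact pos_ne hπ hk (show 1 ≤ a by omega) (by omega) (by omega)
  · exact pos_ne hπ hk (show 1 ≤ b - 1 by omega) (by omega) (by omega)

lemma good_to_nested (hπ : OneLine k π) (hk : 3 ≤ k) {a b : ℕ} (h1 : 1 ≤ a) (hab : a < b)
    (hb : b ≤ k) (hg : GoodSet k π {a, b}) :
    Dist4 (posOf k π (a-1)) (posOf k π a) (posOf k π (b-1)) (posOf k π b) ∧
    NestedX k (posOf k π (a-1)) (posOf k π a) (posOf k π (b-1)) (posOf k π b) := by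
  obtain ⟨hsub, hind, hinn, h1c, hkc⟩ := hg
  have hma : a ∈ ({a, b} : Finset ℕ) := Finset.mem_insert_self a _
  have hmb : b ∈ ({a, b} : Finset ℕ) := Finset.mem_insert_of_mem (Finset.mem_singleton_self b)
  have hnedge : ¬GpiEdge k π a b := fun he => hind a hma b hmb (by omega) (Or.inl ⟨hab, he⟩)
  have hne1 : b ≠ a + 1 := by
    rintro rfl
    exact hnedge (edge_succ hπ hk h1 (by omega))
  have hnk : ¬(a = 1 ∧ b = k) := by
    rintro ⟨rfl, rfl⟩
    exact hnedge (edge_full hπ hk)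
  have hab2 : a + 2 ≤ b := by omega
  have hD4 := dist4_of hπ hk h1 hab2 hb hnk
  refine ⟨hD4, ?_⟩
  have hB := posOf_spec hπ (show 1 ≤ a by omega) (show a ≤ k-1 by omega)
  have hC := posOf_spec hπ (show 1 ≤ b-1 by omega) (show b-1 ≤ k-1 by omega)
  rw [← M1 k _ _ _ _ hk (posOf_lt hπ (by omega) _) (posOf_lt hπ (by omega) _)
    (posOf_lt hπ (by omega) _) (posOf_lt hπ (by omega) _) hB.1.1 hC.1.1 hD4]
  rcases Nat.eq_or_lt_of_le h1 with ha1 | ha2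
  · -- a = 1 (ha1 : 1 = a)
    have hbk : b ≤ k - 1 := by omega
    have hD := posOf_spec hπ (show 1 ≤ b by omega) hbk
    have hbet : Between k π 1 (b-1) b :=
      h1c (by rw [Finset.mem_insert]; left; omega) b hmb (by omega)
    have hA0 : posOf k π (a-1) = 0 := by
      rw [show a - 1 = 0 by omega]
      exact posOf_none hπ (Or.inl rfl)
    rw [hA0] at hD4 ⊢
    rw [M2 k _ _ _ (posOf_lt hπ (by omega) _) (posOf_lt hπ (by omega) _)
      (posOf_lt hπ (by omega) _) hB.1.1 hC.1.1 hD.1.1 hD4]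
    have e : posOf k π 1 = posOf k π a := by rw [← ha1]
    rw [← e]
    exact hbet
  · by_cases hbk : b = k
    · have hD0 : posOf k π b = 0 := by
        rw [hbk]; exact posOf_none hπ (Or.inr (le_refl k))
      have hA := posOf_spec hπ (show 1 ≤ a-1 by omega) (show a-1 ≤ k-1 by omega)
      have hbet : Between k π a (k-1) (a-1) :=
        hkc (by rw [Finset.mem_insert, Finset.mem_singleton]; right; omega) a hma (by omega)
      rw [hD0] at hD4 ⊢
      rw [M3 k _ _ _ (posOf_lt hπ (by omega) _) (posOf_lt hπ (by omega) _)
        (posOf_lt hπ (by omega) _) hA.1.1 hB.1.1 hC.1.1 hD4]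
      have e : posOf k π (b-1) = posOf k π (k-1) := by rw [hbk]
      rw [e]
      exact hbet
    · have hin := hinn a hma b hmb (by omega) hab (by omega)
      exact hin

lemma nested_to_good (hπ : OneLine k π) (hk : 3 ≤ k) {a b : ℕ} (h1 : 1 ≤ a) (hab : a < b)
    (hb : b ≤ k)
    (hD4 : Dist4 (posOf k π (a-1)) (posOf k π a) (posOf k π (b-1)) (posOf k π b))
    (hN : NestedX k (posOf k π (a-1)) (posOf k π a) (posOf k π (b-1)) (posOf k π b)) :
    GoodSet k π ({a, b} : Finset ℕ) := by
  have hnedge := edge_kill hπ hk h1 hab hb hD4 hN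
  have hB := posOf_spec hπ (show 1 ≤ a by omega) (show a ≤ k-1 by omega)
  have hC := posOf_spec hπ (show 1 ≤ b-1 by omega) (show b-1 ≤ k-1 by omega)
  have hPhi : PhiF (posOf k π (a-1)) (posOf k π a) (posOf k π (b-1)) (posOf k π b) :=
    (M1 k _ _ _ _ hk (posOf_lt hπ (by omega) _) (posOf_lt hπ (by omega) _)
      (posOf_lt hπ (by omega) _) (posOf_lt hπ (by omega) _) hB.1.1 hC.1.1 hD4).2 hN
  refine ⟨?_, ?_, ?_, ?_, ?_⟩
  · intro i hi
    rw [Finset.mem_insert, Finset.mem_singleton] at hi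
    rw [Finset.mem_Icc]
    rcases hi with rfl | rfl <;> omega
  · intro i hi j hj hij
    rw [Finset.mem_insert, Finset.mem_singleton] at hi hj
    rintro (⟨hlt, he⟩ | ⟨hlt, he⟩) <;>
      rcases hi with rfl | rfl <;> rcases hj with rfl | rfl <;>
      first
        | omega
        | exact hnedge he
  · intro a' ha' b' hb' h1a' hab' hb'k
    rw [Finset.mem_insert, Finset.mem_singleton] at ha' hb'
    rcases ha' with rfl | rfl <;> rcases hb' with rfl | rfl
    · omega
    · exact hPhi
    · omega
    · omega
  · intro h1m b' hb' hb1
    rw [Finset.mem_insert, Finset.mem_singleton] at h1m hb'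
    have ha1 : a = 1 := by omega
    rcases hb' with h | h
    · omega
    · rw [h]
      have hA0 : posOf k π (a-1) = 0 := by
        rw [show a - 1 = 0 by omega]
        exact posOf_none hπ (Or.inl rfl)
      have hbk : b ≤ k - 1 := by
        by_contra hcon
        have hbk' : b = k := by omega
        have hD0 : posOf k π b = 0 := by
          rw [hbk']; exact posOf_none hπ (Or.inr (le_refl k))
        exact hD4.2.2.1 (by rw [hA0, hD0])
      have hDs := posOf_spec hπ (show 1 ≤ b by omega) hbk
      rw [hA0] at hD4 hPhi
      have hbet := (M2 k _ _ _ (posOf_lt hπ (by omega) _) (posOf_lt hπ (by omega) _)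
        (posOf_lt hπ (by omega) _) hB.1.1 hC.1.1 hDs.1.1 hD4).1 hPhi
      have e : posOf k π 1 = posOf k π a := by rw [ha1]
      show betwL (posOf k π 1) (posOf k π (b-1)) (posOf k π b)
      rw [e]
      exact hbet
  · intro hkm b' hb' hbk'
    rw [Finset.mem_insert, Finset.mem_singleton] at hkm hb'
    have hbk : b = k := by omega
    rcases hb' with h | h
    · rw [h]
      have hD0 : posOf k π b = 0 := by
        rw [hbk]; exact posOf_none hπ (Or.inr (le_refl k))
      have ha2 : 2 ≤ a := by
        by_contra hcon
        have ha1 : a = 1 := by omega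
        have hA0 : posOf k π (a-1) = 0 := by
          rw [show a - 1 = 0 by omega]
          exact posOf_none hπ (Or.inl rfl)
        exact hD4.2.2.1 (by rw [hA0, hD0])
      have hAs := posOf_spec hπ (show 1 ≤ a-1 by omega) (show a-1 ≤ k-1 by omega)
      rw [hD0] at hD4 hPhi
      have hbet := (M3 k _ _ _ (posOf_lt hπ (by omega) _) (posOf_lt hπ (by omega) _)
        (posOf_lt hπ (by omega) _) hAs.1.1 hB.1.1 hC.1.1 hD4).1 hPhi
      have e : posOf k π (b-1) = posOf k π (k-1) := by rw [hbk]
      show betwL (posOf k π a) (posOf k π (k-1)) (posOf k π (a-1))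
      rw [← e]
      exact hbet
    · omega

end Main
theorem stmt14 (k : ℕ) (hk : 3 ≤ k) (π : ℕ → ℕ) (hπ : OneLine k π) :
    (∃ C : Finset ℕ, C.card = 2 ∧ GoodSet k π C) ↔ rot k π ≠ π := by
  constructor
  · rintro ⟨C, hcard, hgood⟩ hrot
    obtain ⟨x, y, hxy, rfl⟩ := Finset.card_eq_two.mp hcard
    have hx : x ∈ Finset.Icc 1 k := hgood.1 (Finset.mem_insert_self x _)
    have hy : y ∈ Finset.Icc 1 k :=
      hgood.1 (Finset.mem_insert_of_mem (Finset.mem_singleton_self y))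
    rw [Finset.mem_Icc] at hx hy
    obtain ⟨M, hM1, hMk, hstep⟩ := L2a hπ hk hrot
    rcases lt_or_gt_of_ne hxy with h | h
    · exact L3 hπ hk hM1 hMk hstep hx.1 h hy.2 (good_to_nested hπ hk hx.1 h hy.2 hgood)
    · rw [Finset.pair_comm] at hgood
      exact L3 hπ hk hM1 hMk hstep hy.1 h hx.2 (good_to_nested hπ hk hy.1 h hx.2 hgood)
  · intro hrot
    by_contra hno
    have Hnone : ∀ a b : ℕ, 1 ≤ a → a < b → b ≤ k →
        ¬(Dist4 (posOf k π (a-1)) (posOf k π a) (posOf k π (b-1)) (posOf k π b) ∧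
          NestedX k (posOf k π (a-1)) (posOf k π a) (posOf k π (b-1)) (posOf k π b)) := by
      rintro a b h1 hab hb ⟨hd, hn⟩
      exact hno ⟨{a, b}, Finset.card_pair (by omega), nested_to_good hπ hk h1 hab hb hd hn⟩
    obtain ⟨M, hM1, hMk, hstep⟩ := L4 hπ hk Hnone
    exact hrot (L2b hπ hk hM1 hMk hstep)

end
end

section
/- Let k ≥ 3, q ≥ 1, π ∈ 𝕊_{k−1}, and let C = {a₁,…,a_t} with t ≥ 2 be a good set for π. Then the distance coloring f : W^π_{k,q} → {0,1,…,k} determined by C is a well-defined Sperner labeling of G^π_{k,q}: f(x) ∈ L^π(x) ∪ {0} for every x ∈ W^π_{k,q}, and for every edge xy of G^π_{k,q} either f(x) = f(y) or 0 ∈ {f(x), f(y)}. -/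
open Finset

attribute [local instance] Classical.propDecidable

noncomputable section

/-! The label part holds because a strict maximum of `dval x` over at least two colors is
positive, and since `dval` uses truncated subtraction, `dval x c > 0` says exactly that
`c ∈ L^π(x)`. For an edge `y = x + e_T`, where `T = {π_a, …, π_{b-1}}` is the set of entries
in a window of positions, `dval` changes by
`[j ∈ T] - [j-1 ∈ T] ∈ {-1, 0, 1}` in coordinate `j`. If `x` had color `u` and `y` color `v ≠ u`,
the gap between coordinates `u` and `v` would have to change by at least `2`, forcing
`u - 1 ∈ T`, `u ∉ T`, `v ∈ T`, `v - 1 ∉ T`. But `T` contains every entry lying between two of its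
entries in `π`, and the betweenness conditions of a good set put `u` or `v - 1` between two
entries of `T`. -/

section

variable {k q : ℕ} {π : ℕ → ℕ}

lemma adjInvF_subset_Icc (k : ℕ) (π : ℕ → ℕ) : adjInvF k π ⊆ Icc 1 (k - 2) := by
  intro i h
  simp only [adjInvF, mem_filter] at h
  exact h.1

lemma eps_one (k : ℕ) (π : ℕ → ℕ) : eps k π 1 = 0 :=
  if_neg fun h => by simpa using adjInvF_subset_Icc k π h

lemma eps_self (k : ℕ) (π : ℕ → ℕ) : eps k π k = 0 :=
  if_neg fun h => by have := mem_Icc.1 (adjInvF_subset_Icc k π h); omega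

lemma xext_pred_add_eps_le {x : ℕ → ℕ} (hx : x ∈ W k q π) {j : ℕ} (hj : j ∈ Icc 1 k) :
    xext k q x (j - 1) + eps k π j ≤ xext k q x j := by
  obtain ⟨hsupp, hle, hmono, hstrict⟩ := hx
  obtain ⟨hj1, hjk⟩ := mem_Icc.1 hj
  rw [xext, if_neg (by omega)]
  rcases hjk.eq_or_lt with rfl | hjk
  · rw [eps_self, xext, if_pos rfl]
    by_cases h : j - 1 ∈ Icc 1 (j - 1)
    · simpa using hle _ h
    · simp [hsupp _ h]
  rw [xext, if_neg hjk.ne]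
  rcases hj1.eq_or_lt with rfl | hj1
  · simp [eps_one, hsupp 0 (by simp)]
  have hj' : j - 1 + 1 = j := by omega
  unfold eps
  split_ifs with hS
  · simpa [hj'] using hstrict _ hS
  · simpa [hj'] using hmono (j - 1) (by omega) (by omega)

lemma xext_shift {a b : ℕ} (x : ℕ → ℕ) (hk : k ∉ (Icc a (b - 1)).image π) (j : ℕ) :
    xext k q (shift π a b x) j
      = xext k q x j + if j ∈ (Icc a (b - 1)).image π then 1 else 0 := by
  by_cases hj : j = k
  · subst hj
    simp [xext, hk]
  · simp [xext, shift, hj]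

lemma dval_shift_add {a b : ℕ} {x : ℕ → ℕ} (hx : x ∈ W k q π) (hy : shift π a b x ∈ W k q π)
    (hk : k ∉ (Icc a (b - 1)).image π) {j : ℕ} (hj : j ∈ Icc 1 k) :
    dval k q π (shift π a b x) j + (if j - 1 ∈ (Icc a (b - 1)).image π then 1 else 0)
      = dval k q π x j + (if j ∈ (Icc a (b - 1)).image π then 1 else 0) := by
  have hx' := xext_pred_add_eps_le hx hj
  have hy' := xext_pred_add_eps_le hy hj
  simp only [dval, xext_shift x hk] at hy' ⊢
  split_ifs at hy' ⊢ <;> omega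

lemma mem_shift_of_strictMax_change {a b : ℕ} {x : ℕ → ℕ} (hx : x ∈ W k q π)
    (hy : shift π a b x ∈ W k q π) (hk : k ∉ (Icc a (b - 1)).image π) {u v : ℕ}
    (hu : u ∈ Icc 1 k) (hv : v ∈ Icc 1 k)
    (hxu : dval k q π x v < dval k q π x u)
    (hyv : dval k q π (shift π a b x) u < dval k q π (shift π a b x) v) :
    u - 1 ∈ (Icc a (b - 1)).image π ∧ u ∉ (Icc a (b - 1)).image π ∧
      v ∈ (Icc a (b - 1)).image π ∧ v - 1 ∉ (Icc a (b - 1)).image π := by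
  have ru := dval_shift_add hx hy hk hu
  have rv := dval_shift_add hx hy hk hv
  refine ⟨by_contra fun h => ?_, fun h => ?_, by_contra fun h => ?_, fun h => ?_⟩ <;>
    simp only [h, if_true, if_false] at ru rv <;> split_ifs at ru rv <;> omega

lemma mem_Icc_of_mem_image_Icc (hπ : Set.MapsTo π (Set.Icc 1 (k - 1)) (Set.Icc 1 (k - 1)))
    {a b s : ℕ} (ha : 1 ≤ a) (hb : b ≤ k) (hs : s ∈ (Icc a (b - 1)).image π) :
    s ∈ Icc 1 (k - 1) := by
  obtain ⟨p, hp, rfl⟩ := mem_image.1 hs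
  have hp := mem_Icc.1 hp
  simpa using hπ (Set.mem_Icc.2 ⟨by omega, by omega⟩)

lemma apply_posOf_of_pos {w : ℕ} (h : 0 < posOf k π w) : π (posOf k π w) = w := by
  unfold posOf at h ⊢
  split_ifs at h ⊢ with hne
  · exact (mem_filter.1 (min'_mem _ hne)).2
  · exact absurd h (lt_irrefl 0)

lemma posOf_apply (hπ : Set.InjOn π (Set.Icc 1 (k - 1))) {p : ℕ} (hp : p ∈ Icc 1 (k - 1)) :
    posOf k π (π p) = p := by
  have hne : ((Icc 1 (k - 1)).filter fun t => π t = π p).Nonempty := ⟨p, mem_filter.2 ⟨hp, rfl⟩⟩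
  obtain ⟨hm, hmp⟩ := mem_filter.1 (min'_mem _ hne)
  rw [posOf, dif_pos hne]
  exact hπ (by simpa using hm) (by simpa using hp) hmp

lemma mem_image_Icc_of_between (hπ : Set.InjOn π (Set.Icc 1 (k - 1))) {a b s t w : ℕ}
    (ha : 1 ≤ a) (hb : b ≤ k) (hs : s ∈ (Icc a (b - 1)).image π)
    (ht : t ∈ (Icc a (b - 1)).image π) (hw : Between k π s t w) :
    w ∈ (Icc a (b - 1)).image π := by
  have hpos : ∀ {r}, r ∈ (Icc a (b - 1)).image π → a ≤ posOf k π r ∧ posOf k π r ≤ b - 1 := by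
    intro r hr
    obtain ⟨p, hp, rfl⟩ := mem_image.1 hr
    have hp := mem_Icc.1 hp
    rw [posOf_apply hπ (mem_Icc.2 ⟨by omega, by omega⟩)]
    exact hp
  have hs := hpos hs
  have ht := hpos ht
  have hw : a ≤ posOf k π w ∧ posOf k π w ≤ b - 1 := by
    rcases hw with hw | hw <;> omega
  exact mem_image.2 ⟨_, mem_Icc.2 hw, apply_posOf_of_pos (by omega)⟩

lemma GoodSet.segment_not_separates {C : Finset ℕ} (hπ : OneLine k π) (hC : GoodSet k π C)
    {u v a b : ℕ} (hu : u ∈ C) (hv : v ∈ C) (huv : u ≠ v) (ha : 1 ≤ a) (hb : b ≤ k)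
    (hu₁ : u - 1 ∈ (Icc a (b - 1)).image π) (hu₀ : u ∉ (Icc a (b - 1)).image π)
    (hv₀ : v ∈ (Icc a (b - 1)).image π) (hv₁ : v - 1 ∉ (Icc a (b - 1)).image π) : False := by
  obtain ⟨-, -, hmid, hone, hlast⟩ := hC
  have hconv := fun {s t w} => mem_image_Icc_of_between hπ.1.injOn ha hb (s := s) (t := t) (w := w)
  have hu' := mem_Icc.1 (mem_Icc_of_mem_image_Icc hπ.1.mapsTo ha hb hu₁)
  have hv' := mem_Icc.1 (mem_Icc_of_mem_image_Icc hπ.1.mapsTo ha hb hv₀)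
  by_cases huk : u = k
  · subst huk
    exact hv₁ (hconv hv₀ hu₁ (hlast hu v hv huv.symm))
  by_cases hv1 : v = 1
  · subst hv1
    exact hu₀ (hconv hv₀ hu₁ (hone hv u hu huv))
  rcases Nat.lt_or_gt_of_ne huv with h | h
  · rcases (hmid u hu v hv (by omega) h (by omega)).1 with hB | hB
    · exact hu₀ (hconv hu₁ hv₀ hB)
    · exact hv₁ (hconv hu₁ hv₀ hB)
  · rcases (hmid v hv u hu (by omega) h (by omega)).2 with hB | hB
    · exact hv₁ (hconv hu₁ hv₀ hB)
    · exact hu₀ (hconv hu₁ hv₀ hB)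

lemma GoodSet.not_strictMax_shift {C : Finset ℕ} (hπ : OneLine k π) (hC : GoodSet k π C)
    {a b : ℕ} (ha : 1 ≤ a) (hb : b ≤ k) {x : ℕ → ℕ} (hx : x ∈ W k q π)
    (hy : shift π a b x ∈ W k q π) {u v : ℕ} (hu : u ∈ C) (hv : v ∈ C) (huv : u ≠ v)
    (hxu : ∀ c ∈ C, c ≠ u → dval k q π x c < dval k q π x u)
    (hyv : ∀ c ∈ C, c ≠ v → dval k q π (shift π a b x) c < dval k q π (shift π a b x) v) :
    False := by
  have hk : k ∉ (Icc a (b - 1)).image π := fun h => by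
    have := mem_Icc.1 (mem_Icc_of_mem_image_Icc hπ.1.mapsTo ha hb h)
    omega
  obtain ⟨hu₁, hu₀, hv₀, hv₁⟩ := mem_shift_of_strictMax_change hx hy hk (hC.1 hu) (hC.1 hv)
    (hxu v hv huv.symm) (hyv u hu huv)
  exact hC.segment_not_separates hπ hu hv huv ha hb hu₁ hu₀ hv₀ hv₁

lemma dcol_eq_zero_or_strictMax (C : Finset ℕ) (x : ℕ → ℕ) :
    dcol k q π C x = 0 ∨ (dcol k q π C x ∈ C ∧
      ∀ c ∈ C, c ≠ dcol k q π C x → dval k q π x c < dval k q π x (dcol k q π C x)) := by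
  unfold dcol
  split_ifs with h
  · exact .inr h.choose_spec
  · exact .inl rfl

lemma mem_labels_of_strictMax {C : Finset ℕ} (hC2 : 2 ≤ C.card) (hC : C ⊆ Icc 1 k)
    {x : ℕ → ℕ} {c : ℕ} (hc : c ∈ C) (hmax : ∀ d ∈ C, d ≠ c → dval k q π x d < dval k q π x c) :
    c ∈ labels k q π x := by
  obtain ⟨d, hd, hdc⟩ := exists_mem_ne (by omega : 1 < C.card) c
  have hpos := hmax d hd hdc
  simp only [dval] at hpos
  exact mem_filter.2 ⟨hC hc, by omega⟩

end

theorem stmt15_general (k q : ℕ) (π : ℕ → ℕ) (hπ : OneLine k π)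
    (C : Finset ℕ) (hC2 : 2 ≤ C.card) (hC : GoodSet k π C) :
    IsSperner k q π (dcol k q π C) := by
  refine ⟨fun x _ => ?_, fun x hx y hy ⟨a, b, ha, _, hb, hxy⟩ => ?_⟩
  · rcases dcol_eq_zero_or_strictMax C x with h | ⟨hc, hmax⟩
    · exact .inl h
    · exact .inr (mem_labels_of_strictMax hC2 hC.1 hc hmax)
  rcases dcol_eq_zero_or_strictMax C x with hx0 | ⟨hu, hxu⟩
  · exact .inr (.inl hx0)
  rcases dcol_eq_zero_or_strictMax C y with hy0 | ⟨hv, hyv⟩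
  · exact .inr (.inr hy0)
  refine .inl (by_contra fun huv => ?_)
  rcases hxy with rfl | rfl
  · exact hC.not_strictMax_shift hπ ha hb hx hy hu hv huv hxu hyv
  · exact hC.not_strictMax_shift hπ ha hb hy hx hv hu (Ne.symm huv) hyv hxu

theorem stmt15 (k q : ℕ) (hk : 3 ≤ k) (hq : 1 ≤ q) (π : ℕ → ℕ) (hπ : OneLine k π)
    (C : Finset ℕ) (hC2 : 2 ≤ C.card) (hC : GoodSet k π C) :
    IsSperner k q π (dcol k q π C) :=
  stmt15_general k q π hπ C hC2 hC

end
end
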